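/- If a generalized split schedule s exists over a set of transactions T = {T_1,...,T_n}, then s is not conflict-serializable. -/
import Mathlib


namespace MVCC

/-! Common formalization of multiversion schedules, dependencies,
conflict/view serializability, isolation levels and robustness. -/

inductive Action : Type
  | init | read | write | commit
deriving DecidableEq

/-- The ambient "environment": each operation belongs to a transaction,
has an action kind and an object; there is a special initial operation `op0`,
and each transaction has a designated commit operation and first operation. -/
structure Env (Obj Tr Opn : Type) where
  tr : Opn → Tr
  act : Opn → Action
  obj : Opn → Obj
  op0 : Opn
  op0_act : act op0 = Action.init
  commitOf : Tr → Opn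
  commit_tr : ∀ t, tr (commitOf t) = t
  commit_act : ∀ t, act (commitOf t) = Action.commit
  firstOf : Tr → Opn
  first_tr : ∀ t, tr (firstOf t) = t

variable {Obj Tr Opn : Type}

/-- Operations present in a schedule over the set of transactions `T'`. -/
def Env.opsOver (E : Env Obj Tr Opn) (T' : Set Tr) : Set Opn :=
  {a | a = E.op0 ∨ E.tr a ∈ T'}

def Env.isRead (E : Env Obj Tr Opn) (a : Opn) : Prop := E.act a = Action.read
def Env.isWrite (E : Env Obj Tr Opn) (a : Opn) : Prop := E.act a = Action.write

/-- A transaction is read-only if it contains no write operations. -/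
def Env.readOnly (E : Env Obj Tr Opn) (t : Tr) : Prop := ∀ a, E.tr a = t → ¬ E.isWrite a

/-- A multiversion schedule over the transactions `T'`:
an operation order `lt` (`<_s`), a version order `vlt` (`<<_s`)
and a version function `vf` (`v_s`). -/
structure Schedule (E : Env Obj Tr Opn) (T' : Set Tr) where
  lt : Opn → Opn → Prop
  vlt : Opn → Opn → Prop
  vf : Opn → Opn
  lt_trans : ∀ a b c, lt a b → lt b c → lt a c
  lt_irrefl : ∀ a, ¬ lt a a
  lt_total : ∀ a ∈ E.opsOver T', ∀ b ∈ E.opsOver T', a ≠ b → lt a b ∨ lt b a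
  op0_first : ∀ a ∈ E.opsOver T', a ≠ E.op0 → lt E.op0 a
  first_first : ∀ a ∈ E.opsOver T', a ≠ E.op0 → a ≠ E.firstOf (E.tr a) →
    lt (E.firstOf (E.tr a)) a
  commit_last : ∀ a ∈ E.opsOver T', a ≠ E.op0 → a ≠ E.commitOf (E.tr a) →
    lt a (E.commitOf (E.tr a))
  vlt_trans : ∀ a b c, vlt a b → vlt b c → vlt a c
  vlt_irrefl : ∀ a, ¬ vlt a a
  vlt_total : ∀ a ∈ E.opsOver T', ∀ b ∈ E.opsOver T', E.isWrite a → E.isWrite b →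
    E.obj a = E.obj b → a ≠ b → vlt a b ∨ vlt b a
  vlt_op0_first : ∀ a ∈ E.opsOver T', E.isWrite a → a ≠ E.op0 → vlt E.op0 a
  vf_read : ∀ a ∈ E.opsOver T', E.isRead a →
    vf a = E.op0 ∨ (vf a ∈ E.opsOver T' ∧ E.isWrite (vf a) ∧ E.obj (vf a) = E.obj a)
  vf_lt : ∀ a ∈ E.opsOver T', E.isRead a → lt (vf a) a

namespace Schedule

variable {E : Env Obj Tr Opn} {T' : Set Tr}

/-- ww-dependency: both writes on the same object, `b <<_s a`. -/
def wwDep (s : Schedule E T') (b a : Opn) : Prop :=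
  b ∈ E.opsOver T' ∧ a ∈ E.opsOver T' ∧ E.tr b ≠ E.tr a ∧ E.obj b = E.obj a ∧
    E.isWrite b ∧ E.isWrite a ∧ s.vlt b a

/-- wr-dependency: `b` write, `a` read, `b = v_s(a)` or `b <<_s v_s(a)`. -/
def wrDep (s : Schedule E T') (b a : Opn) : Prop :=
  b ∈ E.opsOver T' ∧ a ∈ E.opsOver T' ∧ E.tr b ≠ E.tr a ∧ E.obj b = E.obj a ∧
    E.isWrite b ∧ E.isRead a ∧ (b = s.vf a ∨ s.vlt b (s.vf a))

/-- rw-antidependency: `b` read, `a` write, `v_s(b) <<_s a`. -/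
def rwDep (s : Schedule E T') (b a : Opn) : Prop :=
  b ∈ E.opsOver T' ∧ a ∈ E.opsOver T' ∧ E.tr b ≠ E.tr a ∧ E.obj b = E.obj a ∧
    E.isRead b ∧ E.isWrite a ∧ s.vlt (s.vf b) a

/-- `a` depends on `b` in `s`. -/
def dep (s : Schedule E T') (b a : Opn) : Prop :=
  s.wwDep b a ∨ s.wrDep b a ∨ s.rwDep b a

/-- Conflict-equivalence: identical dependencies. -/
def confEquiv (s s' : Schedule E T') : Prop := ∀ b a, s.dep b a ↔ s'.dep b a

/-- `a` installs the last (`<<_s`-maximal) version of its object in `s`. -/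
def lastWrite (s : Schedule E T') (a : Opn) : Prop :=
  a ∈ E.opsOver T' ∧ E.isWrite a ∧
    ¬ ∃ c ∈ E.opsOver T', E.isWrite c ∧ E.obj c = E.obj a ∧ s.vlt a c

/-- View-equivalence: same version function on reads and the same
last installed version per object. -/
def viewEquiv (s s' : Schedule E T') : Prop :=
  (∀ a ∈ E.opsOver T', E.isRead a → s.vf a = s'.vf a) ∧
  (∀ a, s.lastWrite a ↔ s'.lastWrite a)

/-- Single-version schedule: the version order agrees with the operation order
on writes to the same object and every read reads the most recent write. -/
def singleVersion (s : Schedule E T') : Prop :=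
  (∀ a ∈ E.opsOver T', ∀ b ∈ E.opsOver T', E.isWrite a → E.isWrite b →
    E.obj a = E.obj b → (s.vlt a b ↔ s.lt a b)) ∧
  (∀ a ∈ E.opsOver T', E.isRead a →
    ¬ ∃ c ∈ E.opsOver T', E.isWrite c ∧ E.obj c = E.obj a ∧ s.lt (s.vf a) c ∧ s.lt c a)

/-- Serial schedule: transactions are not interleaved. -/
def serial (s : Schedule E T') : Prop :=
  ∀ a b c, a ∈ E.opsOver T' → b ∈ E.opsOver T' → c ∈ E.opsOver T' →
    a ≠ E.op0 → b ≠ E.op0 → c ≠ E.op0 →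
    s.lt a b → s.lt b c → E.tr a = E.tr c → E.tr b = E.tr a

def conflictSerializable (s : Schedule E T') : Prop :=
  ∃ s' : Schedule E T', s'.singleVersion ∧ s'.serial ∧ s.confEquiv s'

def viewSerializable (s : Schedule E T') : Prop :=
  ∃ s' : Schedule E T', s'.singleVersion ∧ s'.serial ∧ s.viewEquiv s'

/-- Edge of the serialization graph. -/
def sgEdge (s : Schedule E T') (ti tj : Tr) : Prop :=
  ∃ b a, s.dep b a ∧ E.tr b = ti ∧ E.tr a = tj

/-- Acyclicity of the serialization graph. -/
def sgAcyclic (s : Schedule E T') : Prop :=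
  ∀ t : Tr, ¬ Relation.TransGen s.sgEdge t t

/-- Transaction `ti` occurs (entirely) before transaction `tj` in `s`. -/
def transBefore (s : Schedule E T') (ti tj : Tr) : Prop :=
  ∀ p ∈ E.opsOver T', ∀ q ∈ E.opsOver T', p ≠ E.op0 → q ≠ E.op0 →
    E.tr p = ti → E.tr q = tj → s.lt p q

/-- Write operation `a` respects the commit order of `s`. -/
def respectsCommitOrder (s : Schedule E T') (a : Opn) : Prop :=
  ∀ b ∈ E.opsOver T', E.isWrite b → E.obj b = E.obj a → E.tr b ≠ E.tr a →
    (s.vlt a b ↔ s.lt (E.commitOf (E.tr a)) (E.commitOf (E.tr b)))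

/-- Read operation `b` is read-last-committed in `s` relative to operation `rel`. -/
def readLastCommitted (s : Schedule E T') (b rel : Opn) : Prop :=
  (s.vf b = E.op0 ∨ s.lt (E.commitOf (E.tr (s.vf b))) rel) ∧
  ¬ ∃ c ∈ E.opsOver T', E.isWrite c ∧ E.obj c = E.obj b ∧
      s.lt (E.commitOf (E.tr c)) rel ∧ s.vlt (s.vf b) c

/-- Transaction `t` exhibits a dirty write in `s`. -/
def dirtyWrite (s : Schedule E T') (t : Tr) : Prop :=
  ∃ b ∈ E.opsOver T', ∃ a ∈ E.opsOver T', E.isWrite b ∧ E.isWrite a ∧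
    E.obj b = E.obj a ∧ E.tr a = t ∧ E.tr b ≠ t ∧
    s.lt b a ∧ s.lt a (E.commitOf (E.tr b))

/-- Transaction `t` exhibits a concurrent write in `s`. -/
def concurrentWrite (s : Schedule E T') (t : Tr) : Prop :=
  ∃ b ∈ E.opsOver T', ∃ a ∈ E.opsOver T', E.isWrite b ∧ E.isWrite a ∧
    E.obj b = E.obj a ∧ E.tr a = t ∧ E.tr b ≠ t ∧
    s.lt b a ∧ s.lt (E.firstOf t) (E.commitOf (E.tr b))

/-- Two transactions are concurrent: each starts before the other commits. -/
def concurrent (s : Schedule E T') (ti tj : Tr) : Prop :=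
  s.lt (E.firstOf ti) (E.commitOf tj) ∧ s.lt (E.firstOf tj) (E.commitOf ti)

/-- Transaction `t` is allowed under Read Committed in `s`. -/
def allowedRC (s : Schedule E T') (t : Tr) : Prop :=
  (∀ a ∈ E.opsOver T', E.tr a = t → a ≠ E.op0 → E.isWrite a → s.respectsCommitOrder a) ∧
  (∀ a ∈ E.opsOver T', E.tr a = t → E.isRead a → s.readLastCommitted a a) ∧
  ¬ s.dirtyWrite t

/-- Transaction `t` is allowed under Snapshot Isolation in `s`. -/
def allowedSI (s : Schedule E T') (t : Tr) : Prop :=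
  (∀ a ∈ E.opsOver T', E.tr a = t → a ≠ E.op0 → E.isWrite a → s.respectsCommitOrder a) ∧
  (∀ a ∈ E.opsOver T', E.tr a = t → E.isRead a → s.readLastCommitted a (E.firstOf t)) ∧
  ¬ s.concurrentWrite t

/-- There is a rw-antidependency from (an operation of) `ti` to `tj`. -/
def rwEdge (s : Schedule E T') (ti tj : Tr) : Prop :=
  ∃ b a, s.rwDep b a ∧ E.tr b = ti ∧ E.tr a = tj

/-- Dangerous structure `t1 → t2 → t3`. -/
def dangerous (s : Schedule E T') (t1 t2 t3 : Tr) : Prop :=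
  s.rwEdge t1 t2 ∧ s.rwEdge t2 t3 ∧ s.concurrent t1 t2 ∧ s.concurrent t2 t3 ∧
  s.lt (E.commitOf t3) (E.commitOf t1) ∧ s.lt (E.commitOf t3) (E.commitOf t2) ∧
  (E.readOnly t1 → s.lt (E.commitOf t3) (E.firstOf t1))

end Schedule

inductive IsoLevel : Type
  | RC | SI | SSI
deriving DecidableEq

/-- A schedule is allowed under the `{RC,SI,SSI}`-allocation `f`. -/
def allowedUnder {E : Env Obj Tr Opn} {T' : Set Tr} (f : Tr → IsoLevel)
    (s : Schedule E T') : Prop :=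
  (∀ t ∈ T', f t = IsoLevel.RC → s.allowedRC t) ∧
  (∀ t ∈ T', f t ≠ IsoLevel.RC → s.allowedSI t) ∧
  ¬ ∃ t1 ∈ T', ∃ t2 ∈ T', ∃ t3 ∈ T', f t1 = IsoLevel.SSI ∧ f t2 = IsoLevel.SSI ∧
      f t3 = IsoLevel.SSI ∧ s.dangerous t1 t2 t3

/-- An (abstract) allocation: for each subset of transactions,
a set of allowed schedules over that subset. -/
def Allocation (E : Env Obj Tr Opn) : Type _ :=
  (T' : Set Tr) → Schedule E T' → Prop

/-- Conflict-robustness: every allowed schedule over every subset of `T`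
is conflict-serializable. -/
def conflictRobust (E : Env Obj Tr Opn) (T : Set Tr) (A : Allocation E) : Prop :=
  ∀ T' : Set Tr, T' ⊆ T → ∀ s : Schedule E T', A T' s → s.conflictSerializable

/-- View-robustness: every allowed schedule over every subset of `T`
is view-serializable. -/
def viewRobust (E : Env Obj Tr Opn) (T : Set Tr) (A : Allocation E) : Prop :=
  ∀ T' : Set Tr, T' ⊆ T → ∀ s : Schedule E T', A T' s → s.viewSerializable

/-- `s` is a generalized split schedule over the transactions `σ 0, …, σ (n-1)`
(cyclically ordered) with split operation `b1` of transaction `σ 0`. -/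
def isGenSplitWith {E : Env Obj Tr Opn} {T' : Set Tr} (s : Schedule E T')
    (n : ℕ) (σ : ZMod n → Tr) (b1 : Opn) : Prop :=
  2 ≤ n ∧ Function.Injective σ ∧ Set.range σ = T' ∧
  b1 ∈ E.opsOver T' ∧ b1 ≠ E.op0 ∧ E.tr b1 = σ 0 ∧
  -- shape: prefix(T1, b1) comes before all operations of T2 … Tn
  (∀ a ∈ E.opsOver T', a ≠ E.op0 → E.tr a = σ 0 → (a = b1 ∨ s.lt a b1) →
    ∀ c ∈ E.opsOver T', c ≠ E.op0 → E.tr c ≠ σ 0 → s.lt a c) ∧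
  -- shape: postfix(T1, b1) comes after all operations of T2 … Tn
  (∀ a ∈ E.opsOver T', a ≠ E.op0 → E.tr a = σ 0 → s.lt b1 a →
    ∀ c ∈ E.opsOver T', c ≠ E.op0 → E.tr c ≠ σ 0 → s.lt c a) ∧
  -- shape: T2 … Tn occur serially, in order
  (∀ i j : ZMod n, i ≠ 0 → j ≠ 0 → i.val < j.val →
    ∀ a ∈ E.opsOver T', ∀ c ∈ E.opsOver T', a ≠ E.op0 → c ≠ E.op0 →
      E.tr a = σ i → E.tr c = σ j → s.lt a c) ∧
  -- (1) there is a cyclic chain of dependencies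
  (∀ i : ZMod n, ∃ b a, s.dep b a ∧ E.tr b = σ i ∧ E.tr a = σ (i + 1)) ∧
  -- (2) the cycle is minimal: all dependencies are between consecutive pairs
  (∀ b a, s.dep b a → ∃ i : ZMod n, E.tr b = σ i ∧ E.tr a = σ (i + 1)) ∧
  -- (3) write operations respect the commit order
  (∀ a ∈ E.opsOver T', a ≠ E.op0 → E.isWrite a → s.respectsCommitOrder a)

/-- `s` is a generalized split schedule. -/
def isGenSplit {E : Env Obj Tr Opn} {T' : Set Tr} (s : Schedule E T') : Prop :=
  ∃ (n : ℕ) (σ : ZMod n → Tr) (b1 : Opn), isGenSplitWith s n σ b1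


section Aux

variable {E : Env Obj Tr Opn} {T' : Set Tr}

lemma aux_ne_op0_of_isWrite {a : Opn} (ha : E.isWrite a) : a ≠ E.op0 := by
  intro h; rw [h, Env.isWrite, E.op0_act] at ha; exact absurd ha (by decide)

lemma aux_ne_op0_of_isRead {a : Opn} (ha : E.isRead a) : a ≠ E.op0 := by
  intro h; rw [h, Env.isRead, E.op0_act] at ha; exact absurd ha (by decide)

/-- In a single-version schedule, any dependency implies operation order. -/
lemma aux_dep_lt {s' : Schedule E T'} (hsv : s'.singleVersion) {b a : Opn}
    (h : s'.dep b a) : s'.lt b a := by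
  obtain ⟨h1, h2⟩ := hsv
  rcases h with ⟨hb, ha, htr, hobj, hwb, hwa, hv⟩ | ⟨hb, ha, htr, hobj, hwb, hra, hv⟩ |
    ⟨hb, ha, htr, hobj, hrb, hwa, hv⟩
  · exact (h1 b hb a ha hwb hwa hobj).mp hv
  · have hlt := s'.vf_lt a ha hra
    rcases hv with rfl | hv
    · exact hlt
    · rcases s'.vf_read a ha hra with h0 | ⟨hvm, hvw, hvo⟩
      · exfalso
        have h3 := s'.vlt_op0_first b hb hwb (aux_ne_op0_of_isWrite hwb)
        rw [h0] at hv
        exact s'.vlt_irrefl b (s'.vlt_trans _ _ _ hv h3)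
      · exact s'.lt_trans _ _ _ ((h1 b hb _ hvm hwb hvw (hobj.trans hvo.symm)).mp hv) hlt
  · have hne : b ≠ a := fun hba => htr (by rw [hba])
    rcases s'.lt_total b hb a ha hne with hlt | hlt
    · exact hlt
    · exfalso
      apply h2 b hb hrb
      refine ⟨a, ha, hwa, hobj.symm, ?_, hlt⟩
      rcases s'.vf_read b hb hrb with h0 | ⟨hvm, hvw, hvo⟩
      · rw [h0]; exact s'.op0_first a ha (aux_ne_op0_of_isWrite hwa)
      · exact (h1 _ hvm a ha hvw hwa (hvo.trans hobj)).mp hv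

/-- Facts one can extract from a dependency. -/
lemma aux_dep_facts {s' : Schedule E T'} {b a : Opn} (h : s'.dep b a) :
    b ∈ E.opsOver T' ∧ a ∈ E.opsOver T' ∧ E.tr b ≠ E.tr a ∧
    b ≠ E.op0 ∧ a ≠ E.op0 ∧ E.act b ≠ Action.commit ∧ E.act a ≠ Action.commit := by
  rcases h with ⟨hb, ha, htr, _, hwb, hwa, _⟩ | ⟨hb, ha, htr, _, hwb, hwa, _⟩ |
    ⟨hb, ha, htr, _, hwb, hwa, _⟩ <;>
  first
  | exact ⟨hb, ha, htr, aux_ne_op0_of_isWrite hwb, aux_ne_op0_of_isWrite hwa,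
      by rw [hwb]; decide, by rw [hwa]; decide⟩
  | exact ⟨hb, ha, htr, aux_ne_op0_of_isWrite hwb, aux_ne_op0_of_isRead hwa,
      by rw [hwb]; decide, by rw [hwa]; decide⟩
  | exact ⟨hb, ha, htr, aux_ne_op0_of_isRead hwb, aux_ne_op0_of_isWrite hwa,
      by rw [hwb]; decide, by rw [hwa]; decide⟩

/-- In a serial schedule, operation order between transactions lifts to commits. -/
lemma aux_commit_lt {s' : Schedule E T'} (hser : s'.serial) {b a : Opn}
    (hb : b ∈ E.opsOver T') (ha : a ∈ E.opsOver T') (htr : E.tr b ≠ E.tr a)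
    (hb0 : b ≠ E.op0) (ha0 : a ≠ E.op0)
    (hbc : E.act b ≠ Action.commit) (hac : E.act a ≠ Action.commit)
    (hlt : s'.lt b a) :
    s'.lt (E.commitOf (E.tr b)) (E.commitOf (E.tr a)) := by
  have hbT : E.tr b ∈ T' := hb.resolve_left hb0
  have haT : E.tr a ∈ T' := ha.resolve_left ha0
  have hcbm : E.commitOf (E.tr b) ∈ E.opsOver T' := Or.inr (by rw [E.commit_tr]; exact hbT)
  have hcam : E.commitOf (E.tr a) ∈ E.opsOver T' := Or.inr (by rw [E.commit_tr]; exact haT)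
  have hcb0 : E.commitOf (E.tr b) ≠ E.op0 := by
    intro h; have := E.commit_act (E.tr b); rw [h, E.op0_act] at this; exact absurd this (by decide)
  have hca0 : E.commitOf (E.tr a) ≠ E.op0 := by
    intro h; have := E.commit_act (E.tr a); rw [h, E.op0_act] at this; exact absurd this (by decide)
  have hbne : b ≠ E.commitOf (E.tr b) := by
    intro h; apply hbc; rw [h, E.commit_act]
  have hane : a ≠ E.commitOf (E.tr a) := by
    intro h; apply hac; rw [h, E.commit_act]
  have hlba : s'.lt a (E.commitOf (E.tr a)) := s'.commit_last a ha ha0 hane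
  have hbcu : s'.lt b (E.commitOf (E.tr a)) := s'.lt_trans _ _ _ hlt hlba
  have hcne : E.commitOf (E.tr b) ≠ E.commitOf (E.tr a) := by
    intro h; apply htr
    have := congrArg E.tr h
    rwa [E.commit_tr, E.commit_tr] at this
  rcases s'.lt_total _ hcbm _ hcam hcne with h | h
  · exact h
  · exfalso
    have := hser b (E.commitOf (E.tr a)) (E.commitOf (E.tr b)) hb hcam hcbm
      hb0 hca0 hcb0 hbcu h (by rw [E.commit_tr])
    rw [E.commit_tr] at this
    exact htr this.symm

end Aux

/-- A generalized split schedule is not conflict-serializable. -/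
theorem stmt3 {Obj Tr Opn : Type} {E : Env Obj Tr Opn} {T' : Set Tr}
    (s : Schedule E T') (h : isGenSplit s) : ¬ s.conflictSerializable := by
  rintro ⟨s', hsv, hser, hequiv⟩
  obtain ⟨n, σ, b1, hn, hinj, hrange, -, -, -, -, -, -, hchain, -, -⟩ := h
  -- for each i, the commit of σ i precedes the commit of σ (i+1) in s'
  have key : ∀ i : ZMod n, s'.lt (E.commitOf (σ i)) (E.commitOf (σ (i + 1))) := by
    intro i
    obtain ⟨b, a, hdep, hbt, hat⟩ := hchain i
    have hdep' : s'.dep b a := (hequiv b a).mp hdep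
    obtain ⟨hb, ha, htr, hb0, ha0, hbc, hac⟩ := aux_dep_facts hdep'
    have hlt : s'.lt b a := aux_dep_lt hsv hdep'
    have := aux_commit_lt hser hb ha htr hb0 ha0 hbc hac hlt
    rwa [hbt, hat] at this
  have step : ∀ k : ℕ, s'.lt (E.commitOf (σ 0)) (E.commitOf (σ ((k + 1 : ℕ) : ZMod n))) := by
    intro k
    induction k with
    | zero =>
      have := key 0
      simpa using this
    | succ m ih =>
      have h2 := key ((m + 1 : ℕ) : ZMod n)
      have : s'.lt (E.commitOf (σ 0)) (E.commitOf (σ (((m + 1 : ℕ) : ZMod n) + 1))) :=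
        s'.lt_trans _ _ _ ih h2
      have hcast : (((m + 1 : ℕ) : ZMod n) + 1) = ((m + 1 + 1 : ℕ) : ZMod n) := by push_cast; ring
      rwa [hcast] at this
  have hpos : 1 ≤ n := le_trans (by norm_num) hn
  have hfin := step (n - 1)
  have hcast : ((n - 1 + 1 : ℕ) : ZMod n) = 0 := by
    rw [Nat.sub_add_cancel hpos, ZMod.natCast_self]
  rw [hcast] at hfin
  exact s'.lt_irrefl _ hfin

end MVCC
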